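/- Let φ be an alternating m-form on ℝ^n and let g₁, g₂ be two inner products on ℝ^n with respect to both of which φ has comass at most 1. Suppose v₁,…,v_m ∈ ℝ^n satisfy φ(v₁,…,v_m) = 1 and Gram_{g₁}(v₁,…,v_m) = Gram_{g₂}(v₁,…,v_m) = 1. If there exists s₀ ∈ (0,1) such that Gram_{(1−s₀)g₁+s₀g₂}(v₁,…,v_m) = 1, then g₁(vᵢ,vⱼ) = g₂(vᵢ,vⱼ) for all i, j ∈ {1,…,m}, and consequently Gram_{(1−s)g₁+s g₂}(v₁,…,v_m) = 1 for every s ∈ [0,1]. -/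

import Mathlib

/-!
Let `A`, `B` be the Gram matrices of `v` for `g₁`, `g₂`: positive definite, of determinant one.
Conjugating by `A^{-1/2}` replaces them by `1` and `M = A^{-1/2} B A^{-1/2}`, whose eigenvalues
`μᵢ > 0` have product one. By Bernoulli's inequality `μᵢ ^ s ≤ 1 - s + s μᵢ`, strictly unless
`μᵢ = 1`, so `det ((1 - s) A + s B) = ∏ (1 - s + s μᵢ) > 1` for `s ∈ (0, 1)` unless `M = 1`,
i.e. unless `A = B`.
-/

/-- The Gram determinant of the vectors `v 0, …, v (m-1)` with respect to a
pairing `g` on `ℝ^n`. -/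
noncomputable def gram {n m : ℕ} (g : (Fin n → ℝ) → (Fin n → ℝ) → ℝ)
    (v : Fin m → (Fin n → ℝ)) : ℝ :=
  (Matrix.of fun i j => g (v i) (v j)).det

/-- `g` is an inner product on `ℝ^n`: a symmetric bilinear form which is
positive definite. -/
def IsInnerProduct {n : ℕ} (g : (Fin n → ℝ) → (Fin n → ℝ) → ℝ) : Prop :=
  (∀ x y, g x y = g y x) ∧ (∀ x, IsLinearMap ℝ (g x)) ∧ ∀ v, v ≠ 0 → 0 < g v v

open Finset in
theorem eq_one_of_prod_eq_one_of_prod_one_sub_add_mul_eq_one {ι : Type*} [Fintype ι]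
    {μ : ι → ℝ} (hμ : ∀ i, 0 < μ i) (hprod : ∏ i, μ i = 1) {s : ℝ} (hs : s ∈ Set.Ioo 0 1)
    (hmix : ∏ i, (1 - s + s * μ i) = 1) (i : ι) : μ i = 1 := by
  by_contra hi
  have hμ_eq (j : ι) : μ j ^ s = (1 + (μ j - 1)) ^ s := by ring_nf
  have hle (j : ι) : μ j ^ s ≤ 1 - s + s * μ j := by
    rw [hμ_eq]
    linarith [rpow_one_add_le_one_add_mul_self (by linarith [hμ j] : -1 ≤ μ j - 1)
      hs.1.le hs.2.le]
  have hlt : μ i ^ s < 1 - s + s * μ i := by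
    rw [hμ_eq]
    linarith [rpow_one_add_lt_one_add_mul_self (by linarith [hμ i] : -1 ≤ μ i - 1)
      (sub_ne_zero.2 hi) hs.1 hs.2]
  have := prod_lt_prod (fun j _ => Real.rpow_pos_of_pos (hμ j) s) (fun j _ => hle j)
    ⟨i, mem_univ i, hlt⟩
  rw [Real.finsetProd_rpow _ _ fun j _ => (hμ j).le, hprod, hmix, Real.one_rpow] at this
  exact this.false

namespace Matrix

variable {n 𝕜 : Type*} [Fintype n] [DecidableEq n] [RCLike 𝕜]

theorem IsHermitian.det_cfc {A : Matrix n n 𝕜} (hA : A.IsHermitian) (f : ℝ → ℝ) :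
    (cfc f A).det = ∏ i, (f (hA.eigenvalues i) : 𝕜) := by
  rw [hA.cfc_eq]
  simp [IsHermitian.cfc, -Unitary.conjStarAlgAut_apply]

theorem IsHermitian.det_one_sub_smul_one_add_smul {A : Matrix n n ℝ} (hA : A.IsHermitian)
    (s : ℝ) :
    ((1 - s) • 1 + s • A).det = ∏ i, (1 - s + s * hA.eigenvalues i) := by
  calc ((1 - s) • 1 + s • A).det = (cfc (fun x => 1 - s + s * x) A).det := by
        rw [cfc_const_add (1 - s) (s * ·) A (ha := hA.isSelfAdjoint),
          cfc_const_mul_id s A hA.isSelfAdjoint, Algebra.algebraMap_eq_smul_one]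
    _ = _ := hA.det_cfc _

theorem IsHermitian.eq_one_of_eigenvalues_eq_one {A : Matrix n n 𝕜} (hA : A.IsHermitian)
    (h : ∀ i, hA.eigenvalues i = 1) : A = 1 := by
  rw [hA.spectral_theorem]
  simp [Function.comp_def, h]

theorem PosDef.eq_one_of_det_eq_one_of_det_one_sub_smul_one_add_smul_eq_one
    {M : Matrix n n ℝ} (hM : M.PosDef) (hdet : M.det = 1) {s : ℝ} (hs : s ∈ Set.Ioo 0 1)
    (hmix : ((1 - s) • 1 + s • M).det = 1) : M = 1 :=
  hM.1.eq_one_of_eigenvalues_eq_one <|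
    eq_one_of_prod_eq_one_of_prod_one_sub_add_mul_eq_one hM.eigenvalues_pos
      (hM.1.det_eq_prod_eigenvalues.symm.trans hdet) hs
      ((hM.1.det_one_sub_smul_one_add_smul s).symm.trans hmix)

open scoped MatrixOrder in
theorem PosDef.eq_of_det_eq_one_of_det_one_sub_smul_add_smul_eq_one {A B : Matrix n n ℝ}
    (hA : A.PosDef) (hB : B.PosDef) (hdA : A.det = 1) (hdB : B.det = 1) {s : ℝ}
    (hs : s ∈ Set.Ioo 0 1) (hmix : ((1 - s) • A + s • B).det = 1) : A = B := by
  set S := CFC.sqrt A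
  have hSS : S * S = A := CFC.sqrt_mul_sqrt_self A hA.posSemidef.nonneg
  have hS : S.IsHermitian := (nonneg_iff_posSemidef.mp (CFC.sqrt_nonneg A)).1
  have hdetS : S.det * S.det = 1 := by rw [← det_mul, hSS, hdA]
  have hSdet : IsUnit S.det := IsUnit.of_mul_eq_one _ hdetS
  set M := S⁻¹ * B * S⁻¹
  have hBM : B = S * M * S := by
    simp only [M, ← mul_assoc, mul_nonsing_inv _ hSdet, one_mul]
    rw [mul_assoc, nonsing_inv_mul _ hSdet, mul_one]
  have hM : M.PosDef := by
    have := hB.conjTranspose_mul_mul_same <|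
      mulVec_injective_iff_isUnit.2 <| isUnit_nonsing_inv_iff.2 <| (isUnit_iff_isUnit_det S).2 hSdet
    rwa [hS.inv.eq] at this
  have hdetM : M.det = 1 := by
    rwa [hBM, det_mul, det_mul, mul_right_comm, hdetS, one_mul] at hdB
  have hmixM : ((1 - s) • 1 + s • M).det = 1 := by
    have hconj : (1 - s) • A + s • B = S * ((1 - s) • 1 + s • M) * S := by
      rw [← hSS, hBM]
      simp only [mul_add, add_mul, mul_smul_comm, smul_mul_assoc, mul_one]
    rwa [hconj, det_mul, det_mul, mul_right_comm, hdetS, one_mul] at hmix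
  rw [hBM, hM.eq_one_of_det_eq_one_of_det_one_sub_smul_one_add_smul_eq_one hdetM hs hmixM,
    mul_one, hSS]

end Matrix

def gramMatrix {α ι : Type*} (g : α → α → ℝ) (v : ι → α) : Matrix ι ι ℝ :=
  Matrix.of fun i j => g (v i) (v j)

theorem gram_eq_det_gramMatrix {n m : ℕ} (g : (Fin n → ℝ) → (Fin n → ℝ) → ℝ)
    (v : Fin m → (Fin n → ℝ)) : gram g v = (gramMatrix g v).det := rfl

theorem gramMatrix_one_sub_mul_add_mul {α ι : Type*} (g₁ g₂ : α → α → ℝ) (v : ι → α) (s : ℝ) :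
    gramMatrix (fun x y => (1 - s) * g₁ x y + s * g₂ x y) v
      = (1 - s) • gramMatrix g₁ v + s • gramMatrix g₂ v := rfl

namespace IsInnerProduct

open Matrix

variable {n : ℕ} {g : (Fin n → ℝ) → (Fin n → ℝ) → ℝ}

def toBilin (hg : IsInnerProduct g) : LinearMap.BilinForm ℝ (Fin n → ℝ) :=
  LinearMap.mk₂ ℝ g
    (fun x y z => by rw [hg.1, (hg.2.1 z).map_add, hg.1 z, hg.1 z])
    (fun c x z => by rw [hg.1, (hg.2.1 z).map_smul, hg.1 z])
    (fun x y z => (hg.2.1 x).map_add y z) (fun c x y => (hg.2.1 x).map_smul c y)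

theorem posSemidef_gramMatrix {ι : Type*} [Fintype ι] (hg : IsInnerProduct g)
    (v : ι → Fin n → ℝ) :
    (gramMatrix g v).PosSemidef := by
  refine .of_dotProduct_mulVec_nonneg (by ext i j; exact hg.1 _ _) fun x => ?_
  set w := ∑ i, x i • v i
  have hw : star x ⬝ᵥ (gramMatrix g v *ᵥ x) = g w w := by
    change _ = hg.toBilin w w
    simp only [dotProduct, star_trivial, mulVec, gramMatrix, of_apply, Finset.mul_sum, toBilin,
      map_sum, map_smul, LinearMap.coe_sum, LinearMap.coe_smul, Finset.sum_apply, Pi.smul_apply,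
      LinearMap.mk₂_apply, smul_eq_mul, w]
    rw [Finset.sum_comm]
    simp only [mul_comm, mul_left_comm]
  rw [hw]
  rcases eq_or_ne w 0 with h0 | h0
  · rw [h0, (hg.2.1 0).map_zero]
  · exact (hg.2.2 w h0).le

end IsInnerProduct

theorem stmt3_general {n m : ℕ}
    (g₁ g₂ : (Fin n → ℝ) → (Fin n → ℝ) → ℝ)
    (hg₁ : IsInnerProduct g₁) (hg₂ : IsInnerProduct g₂)
    (v : Fin m → (Fin n → ℝ))
    (hgram₁ : gram g₁ v = 1) (hgram₂ : gram g₂ v = 1)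
    (s₀ : ℝ) (hs₀ : s₀ ∈ Set.Ioo (0 : ℝ) 1)
    (hmix : gram (fun x y => (1 - s₀) * g₁ x y + s₀ * g₂ x y) v = 1) :
    (∀ i j : Fin m, g₁ (v i) (v j) = g₂ (v i) (v j)) ∧
      ∀ s ∈ Set.Icc (0 : ℝ) 1,
        gram (fun x y => (1 - s) * g₁ x y + s * g₂ x y) v = 1 := by
  rw [gram_eq_det_gramMatrix] at hgram₁ hgram₂ hmix
  have hA := (hg₁.posSemidef_gramMatrix v).posDef_iff_det_ne_zero.2 (hgram₁ ▸ one_ne_zero)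
  have hB := (hg₂.posSemidef_gramMatrix v).posDef_iff_det_ne_zero.2 (hgram₂ ▸ one_ne_zero)
  rw [gramMatrix_one_sub_mul_add_mul] at hmix
  have hAB := hA.eq_of_det_eq_one_of_det_one_sub_smul_add_smul_eq_one hB hgram₁ hgram₂ hs₀ hmix
  refine ⟨fun i j => congrFun₂ hAB i j, fun s _ => ?_⟩
  rw [gram_eq_det_gramMatrix, gramMatrix_one_sub_mul_add_mul, ← hAB, ← add_smul, sub_add_cancel,
    one_smul, hgram₁]

/-- Equality case in the gluing of metrics: if `φ` has comass at most one with
respect to both `g₁` and `g₂`, calibrates `v` with Gram determinant one for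
both metrics, and the Gram determinant is still one for some intermediate
metric `(1-s₀)g₁ + s₀g₂` with `s₀ ∈ (0,1)`, then `g₁` and `g₂` agree on the
vectors `v i`, and the Gram determinant is one for all `s ∈ [0,1]`. -/
theorem stmt3 {n m : ℕ} (φ : (Fin n → ℝ) [⋀^Fin m]→ₗ[ℝ] ℝ)
    (g₁ g₂ : (Fin n → ℝ) → (Fin n → ℝ) → ℝ)
    (hg₁ : IsInnerProduct g₁) (hg₂ : IsInnerProduct g₂)
    (hc₁ : ∀ v : Fin m → (Fin n → ℝ), (φ v) ^ 2 ≤ gram g₁ v)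
    (hc₂ : ∀ v : Fin m → (Fin n → ℝ), (φ v) ^ 2 ≤ gram g₂ v)
    (v : Fin m → (Fin n → ℝ)) (hφv : φ v = 1)
    (hgram₁ : gram g₁ v = 1) (hgram₂ : gram g₂ v = 1)
    (s₀ : ℝ) (hs₀ : s₀ ∈ Set.Ioo (0 : ℝ) 1)
    (hmix : gram (fun x y => (1 - s₀) * g₁ x y + s₀ * g₂ x y) v = 1) :
    (∀ i j : Fin m, g₁ (v i) (v j) = g₂ (v i) (v j)) ∧
      ∀ s ∈ Set.Icc (0 : ℝ) 1,
        gram (fun x y => (1 - s) * g₁ x y + s * g₂ x y) v = 1 :=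
  stmt3_general g₁ g₂ hg₁ hg₂ v hgram₁ hgram₂ s₀ hs₀ hmix
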